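/- arXiv:cs/0202009 — 8 statements merged into one kernel-verified Lean document; each statement's English description precedes it below -/
import Mathlib

section
/- Let X be an m×n real matrix and A an m×k real matrix, both with nonnegative entries, let λ ≥ 0, and let S be a k×n real matrix with strictly positive entries such that (AᵀAS)_{an} + λ > 0 for every index (a,n). Define the matrix S⁺ by S⁺_{an} = S_{an} · (AᵀX)_{an} / ((AᵀAS)_{an} + λ). Then C(A, S⁺) ≤ C(A, S), i.e. the non-negative sparse coding objective is nonincreasing under this multiplicative update rule. -/
open Matrix BigOperators

lemma amgm_aux (s s' u u' : ℝ) (hs : 0 < s) (hs' : 0 < s') :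
    2*(u*u') ≤ s'*u^2/s + s*u'^2/s' := by
  rw [div_add_div _ _ (ne_of_gt hs) (ne_of_gt hs'), le_div_iff₀ (by positivity)]
  nlinarith [sq_nonneg (s'*u - s*u')]

lemma sum_rot {α β γ : Type*} [Fintype α] [Fintype β] [Fintype γ] (f : α → β → γ → ℝ) :
    ∑ i, ∑ j, ∑ a, f i j a = ∑ a, ∑ j, ∑ i, f i j a := by
  rw [Finset.sum_comm]
  refine Eq.trans (Finset.sum_congr rfl fun j _ => ?_) Finset.sum_comm
  exact Finset.sum_comm

lemma sum_transfer {m n k : ℕ} (A : Matrix (Fin m) (Fin k) ℝ)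
    (E : Matrix (Fin m) (Fin n) ℝ) (D : Matrix (Fin k) (Fin n) ℝ) :
    ∑ i, ∑ j, E i j * (A*D) i j = ∑ a, ∑ j, (Aᵀ*E) a j * D a j := by
  simp only [Matrix.mul_apply, Matrix.transpose_apply, Finset.mul_sum, Finset.sum_mul]
  rw [sum_rot (f := fun i j a => E i j * (A i a * D a j))]
  exact Finset.sum_congr rfl fun a _ => Finset.sum_congr rfl fun j _ =>
    Finset.sum_congr rfl fun i _ => by ring

lemma column_bound {k : ℕ} (B : Matrix (Fin k) (Fin k) ℝ)
    (hBsymm : ∀ a a', B a a' = B a' a) (hBpos : ∀ a a', 0 ≤ B a a')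
    (s u : Fin k → ℝ) (hs : ∀ a, 0 < s a) (lam : ℝ) (hlam : 0 ≤ lam) :
    ∑ a, u a * (∑ a', B a a' * u a') ≤
      ∑ a, ((∑ a', B a a' * s a') + lam)/(s a) * (u a)^2 := by
  have key : ∑ a, ∑ a', B a a' * (2*(u a * u a')) ≤
      ∑ a, ∑ a', B a a' * (s a' * (u a)^2/(s a) + s a * (u a')^2/(s a')) := by
    refine Finset.sum_le_sum fun a _ => Finset.sum_le_sum fun a' _ => ?_
    exact mul_le_mul_of_nonneg_left (amgm_aux _ _ _ _ (hs a) (hs a')) (hBpos a a')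
  have swap : ∑ a, ∑ a', B a a' * (s a * (u a')^2/(s a')) =
      ∑ a, ∑ a', B a a' * (s a' * (u a)^2/(s a)) := by
    rw [Finset.sum_comm]
    exact Finset.sum_congr rfl fun a _ => Finset.sum_congr rfl fun a' _ => by
      rw [hBsymm a' a]
  have expand : ∑ a, ∑ a', B a a' * (s a' * (u a)^2/(s a) + s a * (u a')^2/(s a')) =
      2 * ∑ a, ∑ a', B a a' * (s a' * (u a)^2/(s a)) := by
    simp only [mul_add, Finset.sum_add_distrib]
    rw [swap]; ring
  have hL : ∑ a, ∑ a', B a a' * (2*(u a * u a')) =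
      2 * ∑ a, u a * (∑ a', B a a' * u a') := by
    simp only [Finset.mul_sum]
    exact Finset.sum_congr rfl fun a _ => Finset.sum_congr rfl fun a' _ => by ring
  have main : ∑ a, u a * (∑ a', B a a' * u a') ≤
      ∑ a, ∑ a', B a a' * (s a' * (u a)^2/(s a)) := by
    rw [expand, hL] at key; linarith
  refine le_trans main (Finset.sum_le_sum fun a _ => ?_)
  have h1 : ∑ a', B a a' * (s a' * (u a)^2/(s a)) =
      (∑ a', B a a' * s a')/(s a) * (u a)^2 := by
    rw [Finset.sum_div, Finset.sum_mul]
    exact Finset.sum_congr rfl fun a' _ => by ring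
  rw [h1]
  have h2 : 0 ≤ lam/(s a) * (u a)^2 := mul_nonneg (div_nonneg hlam (hs a).le) (sq_nonneg _)
  have h3 : ((∑ a', B a a' * s a') + lam)/(s a) * (u a)^2 =
      (∑ a', B a a' * s a')/(s a) * (u a)^2 + lam/(s a) * (u a)^2 := by
    ring
  linarith


/-- The non-negative sparse coding objective
`C(A,S) = (1/2)·Σ_{ij} (X_{ij} − (AS)_{ij})² + λ·Σ_{ij} S_{ij}`
is nonincreasing under the multiplicative update rule
`S⁺_{an} = S_{an} · (AᵀX)_{an} / ((AᵀAS)_{an} + λ)`. -/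
theorem nnsc_objective_nonincreasing_under_multiplicative_update
    {m n k : ℕ}
    (X : Matrix (Fin m) (Fin n) ℝ) (A : Matrix (Fin m) (Fin k) ℝ)
    (hX : ∀ i j, 0 ≤ X i j) (hA : ∀ i j, 0 ≤ A i j)
    (lam : ℝ) (hlam : 0 ≤ lam)
    (S : Matrix (Fin k) (Fin n) ℝ)
    (hS : ∀ a b, 0 < S a b)
    (hden : ∀ a b, 0 < (Aᵀ * A * S) a b + lam)
    (Splus : Matrix (Fin k) (Fin n) ℝ)
    (hSplus : ∀ a b, Splus a b = S a b * (Aᵀ * X) a b / ((Aᵀ * A * S) a b + lam))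
    (C : Matrix (Fin k) (Fin n) ℝ → ℝ)
    (hC : ∀ S', C S' =
      (1 / 2) * (∑ i, ∑ j, (X i j - (A * S') i j) ^ 2) + lam * ∑ i, ∑ j, S' i j) :
    C Splus ≤ C S := by
    classical
  set D : Matrix (Fin k) (Fin n) ℝ := Splus - S with hD
  set E : Matrix (Fin m) (Fin n) ℝ := X - A*S with hE
  set B : Matrix (Fin k) (Fin k) ℝ := Aᵀ * A with hBdef
  have hBsymm : ∀ a a', B a a' = B a' a := by
    intro a a'
    simp only [hBdef, Matrix.mul_apply, Matrix.transpose_apply]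
    exact Finset.sum_congr rfl fun i _ => mul_comm _ _
  have hBpos : ∀ a a', 0 ≤ B a a' := by
    intro a a'
    simp only [hBdef, Matrix.mul_apply, Matrix.transpose_apply]
    exact Finset.sum_nonneg fun i _ => mul_nonneg (hA i a) (hA i a')
  have hEapp : ∀ i j, E i j = X i j - (A*S) i j := fun i j => rfl
  have hDapp : ∀ a b, D a b = Splus a b - S a b := fun a b => rfl
  have hADapp : ∀ i j, (A*Splus) i j = (A*S) i j + (A*D) i j := by
    intro i j
    have h : A*D = A*Splus - A*S := by rw [hD, Matrix.mul_sub]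
    rw [h]; simp
  have hAtE : Aᵀ*E = Aᵀ*X - B*S := by
    rw [hE, Matrix.mul_sub, hBdef, Matrix.mul_assoc]
  -- named scalar quantities
  set SE : ℝ := ∑ i, ∑ j, (E i j)^2 with hSE
  set T : ℝ := ∑ a, ∑ b, ((Aᵀ*X) a b - (B*S) a b) * D a b with hT
  set Q : ℝ := ∑ a, ∑ b, D a b * ((B*D) a b) with hQ
  set L1 : ℝ := ∑ i, ∑ j, S i j with hL1
  set LD : ℝ := ∑ a, ∑ b, D a b with hLD
  set G : ℝ := ∑ a, ∑ b, (((B*S) a b + lam - (Aᵀ*X) a b) * D a b) with hG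
  -- Step 1: expansion of C Splus
  have f2 : ∑ i, ∑ j, (X i j - (A*S) i j)^2 = SE := rfl
  have f1 : ∑ i, ∑ j, (X i j - (A*Splus) i j)^2 = SE - 2*T + Q := by
    have e1 : ∑ i, ∑ j, (X i j - (A*Splus) i j)^2
        = (∑ i, ∑ j, (E i j)^2) - 2*(∑ i, ∑ j, E i j * (A*D) i j)
          + ∑ i, ∑ j, ((A*D) i j)^2 := by
      have p : ∀ i j, (X i j - (A*Splus) i j)^2 =
          (E i j)^2 - 2*(E i j * (A*D) i j) + ((A*D) i j)^2 := by
        intro i j; rw [hADapp i j, hEapp i j]; ring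
      simp only [p, Finset.sum_add_distrib, Finset.sum_sub_distrib, Finset.mul_sum]
    have e2 : ∑ i, ∑ j, E i j * (A*D) i j = T := by
      rw [sum_transfer, hAtE, hT]
      exact Finset.sum_congr rfl fun a _ => Finset.sum_congr rfl fun b _ => by
        rw [Matrix.sub_apply]
    have e3 : ∑ i, ∑ j, ((A*D) i j)^2 = Q := by
      have t := sum_transfer A (A*D) D
      rw [← Matrix.mul_assoc, ← hBdef] at t
      calc ∑ i, ∑ j, ((A*D) i j)^2 = ∑ i, ∑ j, (A*D) i j * (A*D) i j :=
            Finset.sum_congr rfl fun i _ => Finset.sum_congr rfl fun j _ => sq ((A*D) i j)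
        _ = ∑ a, ∑ b, (B*D) a b * D a b := t
        _ = Q := Finset.sum_congr rfl fun a _ => Finset.sum_congr rfl fun b _ =>
            mul_comm _ _
    rw [e1, e2, e3, hSE]
  have f3 : ∑ i, ∑ j, Splus i j = L1 + LD := by
    rw [hL1, hLD, ← Finset.sum_add_distrib]
    refine Finset.sum_congr rfl fun a _ => ?_
    rw [← Finset.sum_add_distrib]
    exact Finset.sum_congr rfl fun b _ => by rw [hDapp]; ring
  have f4 : G = -T + lam * LD := by
    rw [hG, hT, hLD, Finset.mul_sum, ← Finset.sum_neg_distrib, ← Finset.sum_add_distrib]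
    refine Finset.sum_congr rfl fun a _ => ?_
    rw [Finset.mul_sum, ← Finset.sum_neg_distrib, ← Finset.sum_add_distrib]
    exact Finset.sum_congr rfl fun b _ => by ring
  have key : C Splus = C S + G + (1/2) * Q := by
    rw [hC, hC, f1, f2, f3, f4]; ring
  -- Step 2: majorize quadratic term
  have step2 : Q ≤ ∑ a, ∑ b, ((B*S) a b + lam)/(S a b) * (D a b)^2 := by
    rw [hQ, Finset.sum_comm,
      Finset.sum_comm (f := fun a b => ((B*S) a b + lam)/(S a b) * (D a b)^2)]
    refine Finset.sum_le_sum fun b _ => ?_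
    have := column_bound B hBsymm hBpos (fun a => S a b) (fun a => D a b)
      (fun a => hS a b) lam hlam
    simpa only [Matrix.mul_apply] using this
  -- Step 3: pointwise bound
  have step3 : ∀ a b, ((B*S) a b + lam - (Aᵀ*X) a b) * D a b
      + (1/2) * (((B*S) a b + lam)/(S a b) * (D a b)^2) ≤ 0 := by
    intro a b
    have hd : 0 < (B*S) a b + lam := hden a b
    have hs : 0 < S a b := hS a b
    set d := (B*S) a b + lam with hdd
    set s := S a b with hss
    set t := (Aᵀ*X) a b with htt
    have hDv : D a b = s*t/d - s := by rw [hDapp, hSplus]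
    rw [hDv]
    have heq : (d - t) * (s*t/d - s) + (1/2) * ((d/s) * (s*t/d - s)^2)
        = -(s*(d-t)^2/(2*d)) := by
      field_simp
      ring
    have h0 : 0 ≤ s*(d-t)^2/(2*d) := by positivity
    rw [heq]; linarith
  -- combine
  have total : G + (1/2) * Q ≤ 0 := by
    have hcomb : G + (1/2) * (∑ a, ∑ b, ((B*S) a b + lam)/(S a b) * (D a b)^2)
        = ∑ a, ∑ b, (((B*S) a b + lam - (Aᵀ*X) a b) * D a b
            + (1/2) * (((B*S) a b + lam)/(S a b) * (D a b)^2)) := by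
      rw [hG, Finset.mul_sum, ← Finset.sum_add_distrib]
      refine Finset.sum_congr rfl fun a _ => ?_
      rw [Finset.mul_sum, ← Finset.sum_add_distrib]
    have hle : G + (1/2) * (∑ a, ∑ b, ((B*S) a b + lam)/(S a b) * (D a b)^2) ≤ 0 := by
      rw [hcomb]
      exact Finset.sum_nonpos fun a _ => Finset.sum_nonpos fun b _ => step3 a b
    linarith
  linarith [key, total]
end

section
/- Let x ∈ ℝᵐ, let A be an m×k real matrix with nonnegative entries, let λ ≥ 0, and let s ∈ ℝᵏ have strictly positive entries with (AᵀAs)_a + λ > 0 for every index a. Define s⁺ ∈ ℝᵏ by s⁺_a = s_a · (Aᵀx)_a / ((AᵀAs)_a + λ). Then F(s⁺) ≤ F(s). -/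
open Matrix BigOperators

/-!
Write `t = s⁺ - s`, `c = Aᵀx` and `D = AᵀAs + λ`. Since `F` is quadratic,
`F (s + t) - F s = Σₐ (Dₐ - cₐ) tₐ + ½ tᵀ(AᵀA)t` exactly. As `AᵀA` is symmetric with
nonnegative entries and `s > 0`, the quadratic term is at most `Σₐ (AᵀAs)ₐ tₐ² / sₐ ≤ Σₐ Dₐ tₐ² / sₐ`.
The resulting separable surrogate `Σₐ ((Dₐ - cₐ) tₐ + Dₐ tₐ² / (2 sₐ))` is minimised coordinatewise
precisely by the multiplicative update, where it equals `-Σₐ sₐ (Dₐ - cₐ)² / (2 Dₐ) ≤ 0`.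
-/

section
variable {ι κ : Type*} [Fintype ι] [Fintype κ]

theorem two_mul_le_div_add_div {p q : ℝ} (hp : 0 < p) (hq : 0 < q) (a b : ℝ) :
    2 * (a * b) ≤ q * a ^ 2 / p + p * b ^ 2 / q := by
  rw [div_add_div _ _ hp.ne' hq.ne', le_div_iff₀ (by positivity)]
  nlinarith [sq_nonneg (q * a - p * b)]

/-- Lee–Seung majorization: for symmetric `Q ≥ 0` and `s > 0`, the diagonal matrix
`diag ((Q *ᵥ s) / s)` dominates `Q` as a quadratic form. -/
theorem dotProduct_mulVec_le_sum_mulVec_mul_sq_div {Q : Matrix κ κ ℝ} (hQ : Q.IsSymm)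
    (hQ₀ : ∀ a b, 0 ≤ Q a b) {s : κ → ℝ} (hs : ∀ a, 0 < s a) (t : κ → ℝ) :
    t ⬝ᵥ (Q *ᵥ t) ≤ ∑ a, (Q *ᵥ s) a * t a ^ 2 / s a := by
  set R := ∑ a, ∑ b, Q a b * (s b * t a ^ 2 / s a)
  have hL : t ⬝ᵥ (Q *ᵥ t) = ∑ a, ∑ b, Q a b * (t a * t b) := by
    simp only [dotProduct, mulVec, Finset.mul_sum]
    exact Finset.sum_congr rfl fun a _ => Finset.sum_congr rfl fun b _ => by ring
  have hR : ∑ a, (Q *ᵥ s) a * t a ^ 2 / s a = R := by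
    simp only [R, mulVec, dotProduct, Finset.sum_mul, Finset.sum_div]
    exact Finset.sum_congr rfl fun a _ => Finset.sum_congr rfl fun b _ => by ring
  have hR' : ∑ a, ∑ b, Q b a * (s a * t b ^ 2 / s b) = R := Finset.sum_comm
  have hterm : ∀ a b, 2 * (Q a b * (t a * t b)) ≤
      Q a b * (s b * t a ^ 2 / s a) + Q b a * (s a * t b ^ 2 / s b) := by
    intro a b
    rw [hQ.apply a b, mul_left_comm, ← mul_add]
    exact mul_le_mul_of_nonneg_left (two_mul_le_div_add_div (hs a) (hs b) _ _) (hQ₀ a b)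
  have hsum := Finset.sum_le_sum fun a (_ : a ∈ Finset.univ) =>
    Finset.sum_le_sum fun b (_ : b ∈ Finset.univ) => hterm a b
  simp only [← Finset.mul_sum, Finset.sum_add_distrib, hR'] at hsum
  linarith

theorem sum_sq_sub_mulVec_add (x : ι → ℝ) (A : Matrix ι κ ℝ) (s t : κ → ℝ) :
    ∑ i, (x i - (A *ᵥ (s + t)) i) ^ 2 = ∑ i, (x i - (A *ᵥ s) i) ^ 2
      + 2 * (((Aᵀ * A) *ᵥ s - Aᵀ *ᵥ x) ⬝ᵥ t) + t ⬝ᵥ ((Aᵀ * A) *ᵥ t) := by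
  have hsq : ∀ v : ι → ℝ, ∑ i, v i ^ 2 = v ⬝ᵥ v := fun v => by simp only [dotProduct, sq]
  set r := x - A *ᵥ s
  have hr : (fun i => x i - (A *ᵥ (s + t)) i) = r - A *ᵥ t := by
    ext i; simp only [r, mulVec_add, Pi.sub_apply, Pi.add_apply]; ring
  have hcross : r ⬝ᵥ (A *ᵥ t) = -(((Aᵀ * A) *ᵥ s - Aᵀ *ᵥ x) ⬝ᵥ t) := by
    rw [dotProduct_mulVec, ← mulVec_transpose, mulVec_sub, mulVec_mulVec, ← neg_dotProduct,
      neg_sub]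
  have hquad : (A *ᵥ t) ⬝ᵥ (A *ᵥ t) = t ⬝ᵥ ((Aᵀ * A) *ᵥ t) := by
    rw [← mulVec_mulVec, dotProduct_mulVec t, vecMul_transpose]
  rw [hsq, hsq, hr, show (fun i => x i - (A *ᵥ s) i) = r from rfl]
  simp only [sub_dotProduct, dotProduct_sub, dotProduct_comm (A *ᵥ t) r, hcross, hquad]
  ring

theorem quadratic_at_vertex_nonpos {s D c : ℝ} (hs : 0 < s) (hD : 0 < D) :
    (D - c) * (s * c / D - s) + D * (s * c / D - s) ^ 2 / s / 2 ≤ 0 := by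
  have : (D - c) * (s * c / D - s) + D * (s * c / D - s) ^ 2 / s / 2
      = -(s * (D - c) ^ 2 / (2 * D)) := by
    field_simp
    ring
  rw [this, neg_nonpos]
  positivity

end

/-- For the single-column objective
`F(s) = (1/2)·‖x − As‖² + λ·Σ_i s_i`, the multiplicative update
`s⁺_a = s_a · (Aᵀx)_a / ((AᵀAs)_a + λ)` does not increase `F`. -/
theorem nnsc_single_column_multiplicative_update_nonincreasing
    {m k : ℕ}
    (x : Fin m → ℝ) (A : Matrix (Fin m) (Fin k) ℝ)
    (hA : ∀ i j, 0 ≤ A i j)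
    (lam : ℝ) (hlam : 0 ≤ lam)
    (s : Fin k → ℝ) (hs : ∀ a, 0 < s a)
    (hden : ∀ a, 0 < (Aᵀ * A).mulVec s a + lam)
    (splus : Fin k → ℝ)
    (hsplus : ∀ a, splus a = s a * (Aᵀ.mulVec x) a / ((Aᵀ * A).mulVec s a + lam))
    (F : (Fin k → ℝ) → ℝ)
    (hF : ∀ s', F s' =
      (1 / 2) * (∑ i, (x i - A.mulVec s' i) ^ 2) + lam * ∑ i, s' i) :
    F splus ≤ F s := by
  set Q := Aᵀ * A
  set c := Aᵀ *ᵥ x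
  set t := splus - s
  have hQ : Q.IsSymm := by simp only [Q, IsSymm, transpose_mul, transpose_transpose]
  have hQ₀ : ∀ a b, 0 ≤ Q a b := fun a b => by
    simp only [Q, mul_apply, transpose_apply]
    exact Finset.sum_nonneg fun i _ => mul_nonneg (hA i a) (hA i b)
  have hexpand : F splus - F s = ∑ a, ((Q *ᵥ s) a + lam - c a) * t a
      + t ⬝ᵥ (Q *ᵥ t) / 2 := by
    have hlin : ∑ a, ((Q *ᵥ s) a + lam - c a) * t a = (Q *ᵥ s - c) ⬝ᵥ t + lam * ∑ a, t a := by
      simp only [dotProduct, Finset.mul_sum, ← Finset.sum_add_distrib, Pi.sub_apply]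
      exact Finset.sum_congr rfl fun a _ => by ring
    rw [hF, hF, show splus = s + t from (add_sub_cancel s splus).symm, sum_sq_sub_mulVec_add,
      hlin]
    simp only [Pi.add_apply, Finset.sum_add_distrib]
    ring
  have hmajor : t ⬝ᵥ (Q *ᵥ t) ≤ ∑ a, ((Q *ᵥ s) a + lam) * t a ^ 2 / s a :=
    (dotProduct_mulVec_le_sum_mulVec_mul_sq_div hQ hQ₀ hs t).trans <|
      Finset.sum_le_sum fun a _ => div_le_div_of_nonneg_right
        (mul_le_mul_of_nonneg_right (le_add_of_nonneg_right hlam) (sq_nonneg _)) (hs a).le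
  have hvertex : ∀ a, ((Q *ᵥ s) a + lam - c a) * t a
      + ((Q *ᵥ s) a + lam) * t a ^ 2 / s a / 2 ≤ 0 := by
    intro a
    have ht : t a = s a * c a / ((Q *ᵥ s) a + lam) - s a := by simp only [t, Pi.sub_apply, hsplus]
    rw [ht]
    exact quadratic_at_vertex_nonpos (hs a) (hden a)
  have hsum := Finset.sum_nonpos fun a (_ : a ∈ Finset.univ) => hvertex a
  rw [Finset.sum_add_distrib, ← Finset.sum_div] at hsum
  linarith
end

section
/- Let A be an m×k real matrix with nonnegative entries, let λ ≥ 0, and let sᵗ ∈ ℝᵏ have strictly positive entries. Define the diagonal k×k matrix K(sᵗ) by K(sᵗ)_{ab} = δ_{ab} · ((AᵀA sᵗ)_a + λ) / sᵗ_a. Then the matrix K(sᵗ) − AᵀA is positive semidefinite: for every v ∈ ℝᵏ, vᵀ(K(sᵗ) − AᵀA)v ≥ 0. -/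
/-!
Writing `B = AᵀA`, the quadratic form of `diag(B s / s) − B` is
`∑_{a,b} B_ab (s_b v_a² / s_a − v_a v_b)`; pairing the terms `(a, b)` and `(b, a)` turns it into
`½ ∑_{a,b} B_ab (s_b v_a − s_a v_b)² / (s_a s_b) ≥ 0`, since `B` is symmetric with nonnegative
entries. The remaining part `diag(λ / s)` of `K(sᵗ) − AᵀA` is a nonnegative diagonal matrix.
-/

open Matrix

section

variable {n : Type*} [Fintype n] [DecidableEq n]

theorem dotProduct_diagonal_mulVec_nonneg {d : n → ℝ} (hd : ∀ a, 0 ≤ d a) (v : n → ℝ) :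
    0 ≤ v ⬝ᵥ (diagonal d *ᵥ v) := by
  simp only [dotProduct, mulVec_diagonal]
  exact Finset.sum_nonneg fun a _ => by nlinarith [hd a, sq_nonneg (v a)]

theorem dotProduct_diagonal_mulVec_div_sub_mulVec_nonneg {B : Matrix n n ℝ} (hB : B.IsSymm)
    (hB₀ : ∀ a b, 0 ≤ B a b) {s : n → ℝ} (hs : ∀ a, 0 < s a) (v : n → ℝ) :
    0 ≤ v ⬝ᵥ ((diagonal fun a => (B *ᵥ s) a / s a) - B) *ᵥ v := by
  set f : n → n → ℝ := fun a b => B a b * (s b * v a ^ 2 / s a - v a * v b)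
  have hexpand : v ⬝ᵥ ((diagonal fun a => (B *ᵥ s) a / s a) - B) *ᵥ v = ∑ a, ∑ b, f a b := by
    rw [sub_mulVec, dotProduct_sub]
    simp only [dotProduct, mulVec_diagonal]
    simp only [mulVec, dotProduct, f, mul_sub, Finset.sum_sub_distrib, Finset.mul_sum,
      Finset.sum_div, Finset.sum_mul]
    congr 1 <;> refine Finset.sum_congr rfl fun a _ => Finset.sum_congr rfl fun b _ => by ring
  have hsymm : 2 * ∑ a, ∑ b, f a b
      = ∑ a, ∑ b, B a b * ((s b * v a - s a * v b) ^ 2 / (s a * s b)) := by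
    rw [two_mul]
    nth_rw 2 [Finset.sum_comm]
    rw [← Finset.sum_add_distrib]
    refine Finset.sum_congr rfl fun a _ => ?_
    rw [← Finset.sum_add_distrib]
    refine Finset.sum_congr rfl fun b _ => ?_
    have := (hs a).ne'
    have := (hs b).ne'
    simp only [f, hB.apply b a]
    field_simp
    ring
  have hsq : 0 ≤ ∑ a, ∑ b, B a b * ((s b * v a - s a * v b) ^ 2 / (s a * s b)) :=
    Finset.sum_nonneg fun a _ => Finset.sum_nonneg fun b _ =>
      mul_nonneg (hB₀ a b) (div_nonneg (sq_nonneg _) (mul_pos (hs a) (hs b)).le)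
  linarith

end

theorem isSymm_transpose_mul_self' {m n α : Type*} [Fintype m] [NonUnitalCommSemiring α]
    (A : Matrix m n α) :
    (Aᵀ * A).IsSymm := by
  rw [IsSymm, transpose_mul, transpose_transpose]

theorem transpose_mul_self_apply_nonneg {m n : Type*} [Fintype m] {A : Matrix m n ℝ}
    (hA : ∀ i j, 0 ≤ A i j) (a b : n) : 0 ≤ (Aᵀ * A) a b :=
  Finset.sum_nonneg fun i _ => mul_nonneg (hA i a) (hA i b)

/-- For `A` with nonnegative entries, `λ ≥ 0` and `sᵗ` with strictly
positive entries, the matrix `K(sᵗ) − AᵀA` is positive semidefinite, where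
`K(sᵗ)` is the diagonal matrix with entries `((AᵀA sᵗ)_a + λ) / sᵗ_a`. -/
theorem nnsc_K_minus_AtA_posSemidef
    {m k : ℕ}
    (A : Matrix (Fin m) (Fin k) ℝ) (hA : ∀ i j, 0 ≤ A i j)
    (lam : ℝ) (hlam : 0 ≤ lam)
    (sT : Fin k → ℝ) (hsT : ∀ a, 0 < sT a)
    (K : Matrix (Fin k) (Fin k) ℝ)
    (hK : K = Matrix.diagonal (fun a => ((Aᵀ * A).mulVec sT a + lam) / sT a)) :
    ∀ v : Fin k → ℝ, 0 ≤ v ⬝ᵥ (K - Aᵀ * A).mulVec v := by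
  intro v
  have hsplit : K - Aᵀ * A = ((diagonal fun a => ((Aᵀ * A) *ᵥ sT) a / sT a) - Aᵀ * A)
      + diagonal fun a => lam / sT a := by
    rw [hK, sub_add_eq_add_sub, diagonal_add]
    simp only [add_div]
  rw [hsplit, add_mulVec, dotProduct_add]
  exact add_nonneg
    (dotProduct_diagonal_mulVec_div_sub_mulVec_nonneg (isSymm_transpose_mul_self' A)
      (transpose_mul_self_apply_nonneg hA) hsT v)
    (dotProduct_diagonal_mulVec_nonneg (fun a => div_nonneg hlam (hsT a).le) v)
end

section
/- Let x ∈ ℝᵐ, let A be an m×k real matrix with nonnegative entries, let λ ≥ 0, and let sᵗ ∈ ℝᵏ have strictly positive entries. Then for every s ∈ ℝᵏ, G(s, sᵗ) ≥ F(s), where G(s, sᵗ) = F(sᵗ) + (s − sᵗ)ᵀ∇F(sᵗ) + (1/2)·(s − sᵗ)ᵀK(sᵗ)(s − sᵗ), with ∇F(sᵗ) = Aᵀ(Asᵗ − x) + λ·1 (1 being the all-ones vector in ℝᵏ). -/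
open Matrix BigOperators

/-- Key PSD inequality: for a symmetric nonnegative matrix `B` and positive `sT`,
`vᵀ B v ≤ ∑ a, (B sT)_a v_a² / sT_a`. -/
lemma nnsc_key {k : ℕ} (B : Matrix (Fin k) (Fin k) ℝ)
    (hB : ∀ a b, 0 ≤ B a b) (hsym : ∀ a b, B a b = B b a)
    (sT v : Fin k → ℝ) (hsT : ∀ a, 0 < sT a) :
    ∑ a, ∑ b, B a b * v a * v b ≤
      ∑ a, (∑ b, B a b * sT b) * v a ^ 2 / sT a := by
  have hD : 0 ≤ ∑ a, ((∑ b, B a b * sT b) * v a ^ 2 / sT a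
      - ∑ b, B a b * v a * v b) := by
    have h2 : 2 * ∑ a, ((∑ b, B a b * sT b) * v a ^ 2 / sT a
        - ∑ b, B a b * v a * v b)
        = ∑ a, ∑ b, B a b / (sT a * sT b) * (sT b * v a - sT a * v b) ^ 2 := by
      have hrw : ∀ a : Fin k, (∑ b, B a b * sT b) * v a ^ 2 / sT a
          - ∑ b, B a b * v a * v b
          = ∑ b, (B a b * sT b * v a ^ 2 / sT a - B a b * v a * v b) := by
        intro a
        rw [Finset.sum_sub_distrib, Finset.sum_mul, Finset.sum_div]
      simp only [hrw]
      rw [two_mul]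
      nth_rewrite 2 [show (∑ a, ∑ b, (B a b * sT b * v a ^ 2 / sT a - B a b * v a * v b))
          = ∑ a, ∑ b, (B b a * sT a * v b ^ 2 / sT b - B b a * v b * v a) from
        Finset.sum_comm]
      rw [← Finset.sum_add_distrib]
      refine Finset.sum_congr rfl (fun a _ => ?_)
      rw [← Finset.sum_add_distrib]
      refine Finset.sum_congr rfl (fun b _ => ?_)
      rw [hsym b a]
      have ha := (hsT a).ne'
      have hb := (hsT b).ne'
      field_simp
      ring
    have hrhs : 0 ≤ ∑ a, ∑ b, B a b / (sT a * sT b) * (sT b * v a - sT a * v b) ^ 2 := by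
      refine Finset.sum_nonneg (fun a _ => Finset.sum_nonneg (fun b _ => ?_))
      have : 0 ≤ B a b / (sT a * sT b) :=
        div_nonneg (hB a b) (le_of_lt (mul_pos (hsT a) (hsT b)))
      positivity
    linarith [h2 ▸ hrhs]
  have := Finset.sum_sub_distrib (s := Finset.univ)
    (f := fun a => (∑ b, B a b * sT b) * v a ^ 2 / sT a)
    (g := fun a => ∑ b, B a b * v a * v b)
  linarith [hD, this ▸ hD]

/-- The auxiliary function
`G(s, sᵗ) = F(sᵗ) + (s − sᵗ)ᵀ∇F(sᵗ) + (1/2)·(s − sᵗ)ᵀK(sᵗ)(s − sᵗ)`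
upper-bounds the single-column objective `F(s) = (1/2)·‖x − As‖² + λ·Σ_i s_i`,
where `∇F(sᵗ) = Aᵀ(Asᵗ − x) + λ·1` and `K(sᵗ)` is the diagonal matrix with
entries `((AᵀA sᵗ)_a + λ) / sᵗ_a`. -/
theorem nnsc_auxiliary_upper_bounds_objective
    {m k : ℕ}
    (x : Fin m → ℝ) (A : Matrix (Fin m) (Fin k) ℝ)
    (hA : ∀ i j, 0 ≤ A i j)
    (lam : ℝ) (hlam : 0 ≤ lam)
    (sT : Fin k → ℝ) (hsT : ∀ a, 0 < sT a)
    (F : (Fin k → ℝ) → ℝ)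
    (hF : ∀ s', F s' =
      (1 / 2) * (∑ i, (x i - A.mulVec s' i) ^ 2) + lam * ∑ i, s' i)
    (K : Matrix (Fin k) (Fin k) ℝ)
    (hK : K = Matrix.diagonal (fun a => ((Aᵀ * A).mulVec sT a + lam) / sT a))
    (gradF : Fin k → ℝ)
    (hgrad : gradF = Aᵀ.mulVec (A.mulVec sT - x) + fun _ => lam)
    (G : (Fin k → ℝ) → ℝ)
    (hG : ∀ s, G s = F sT + (s - sT) ⬝ᵥ gradF
      + (1 / 2) * ((s - sT) ⬝ᵥ K.mulVec (s - sT))) :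
    ∀ s : Fin k → ℝ, G s ≥ F s := by
  intro s
  set v : Fin k → ℝ := s - sT with hv
  set B : Matrix (Fin k) (Fin k) ℝ := Aᵀ * A with hB
  -- identity (1): expansion of F s
  have hmv : ∀ i, A.mulVec s i = A.mulVec sT i + A.mulVec v i := by
    intro i
    have : s = sT + v := by simp [hv]
    rw [this, Matrix.mulVec_add, Pi.add_apply]
  have hFs : F s = F sT + (∑ i, (A.mulVec v i) * (A.mulVec sT i - x i))
      + lam * ∑ a, v a + (1/2) * ∑ i, (A.mulVec v i)^2 := by
    rw [hF s, hF sT]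
    have hsq : ∀ i, (x i - A.mulVec s i)^2
        = (x i - A.mulVec sT i)^2 + 2 * ((A.mulVec v i) * (A.mulVec sT i - x i))
          + (A.mulVec v i)^2 := by
      intro i; rw [hmv i]; ring
    have hsum : ∑ i, (x i - A.mulVec s i)^2
        = ∑ i, (x i - A.mulVec sT i)^2
          + 2 * (∑ i, (A.mulVec v i) * (A.mulVec sT i - x i))
          + ∑ i, (A.mulVec v i)^2 := by
      simp only [hsq]
      rw [Finset.sum_add_distrib, Finset.sum_add_distrib, Finset.mul_sum]
    have hsumv : ∑ a, s a = ∑ a, sT a + ∑ a, v a := by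
      rw [← Finset.sum_add_distrib]
      refine Finset.sum_congr rfl (fun a _ => ?_)
      simp [hv]
    rw [hsum, hsumv]; ring
  -- identity (2): v ⬝ᵥ gradF
  have hvg : v ⬝ᵥ gradF = (∑ i, (A.mulVec v i) * (A.mulVec sT i - x i))
      + lam * ∑ a, v a := by
    rw [hgrad]
    have : v ⬝ᵥ (Aᵀ.mulVec (A.mulVec sT - x) + fun _ => lam)
        = v ⬝ᵥ Aᵀ.mulVec (A.mulVec sT - x) + v ⬝ᵥ (fun _ => lam) := by
      exact dotProduct_add v _ _
    rw [this]
    congr 1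
    · rw [Matrix.dotProduct_mulVec]
      have : v ᵥ* Aᵀ = A.mulVec v := by
        ext i; simp [Matrix.vecMul, Matrix.mulVec, dotProduct, Matrix.transpose_apply,
          mul_comm]
      rw [this]
      simp [dotProduct, Pi.sub_apply]
    · simp [dotProduct, Finset.mul_sum, mul_comm]
  -- identity (3): v ⬝ᵥ K v
  have hvK : v ⬝ᵥ K.mulVec v = ∑ a, (B.mulVec sT a + lam) * v a ^ 2 / sT a := by
    rw [hK]
    simp only [dotProduct, Matrix.mulVec_diagonal]
    exact Finset.sum_congr rfl (fun a _ => by ring)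
  -- quadratic term of F
  have hquad : ∑ i, (A.mulVec v i)^2 = ∑ a, ∑ b, B a b * v a * v b := by
    have h1 : ∀ i, (A.mulVec v i)^2 = ∑ a, ∑ b, A i a * v a * (A i b * v b) := by
      intro i
      simp [Matrix.mulVec, dotProduct, sq, Finset.sum_mul_sum]
    simp only [hB, Matrix.mul_apply, Matrix.transpose_apply]
    calc ∑ i, (A.mulVec v i)^2
        = ∑ i, ∑ a, ∑ b, A i a * v a * (A i b * v b) := by simp only [h1]
      _ = ∑ a, ∑ i, ∑ b, A i a * v a * (A i b * v b) := Finset.sum_comm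
      _ = ∑ a, ∑ b, ∑ i, A i a * v a * (A i b * v b) :=
          Finset.sum_congr rfl (fun a _ => Finset.sum_comm)
      _ = ∑ a, ∑ b, (∑ i, A i a * A i b) * v a * v b := by
          refine Finset.sum_congr rfl (fun a _ => Finset.sum_congr rfl (fun b _ => ?_))
          rw [Finset.sum_mul, Finset.sum_mul]
          exact Finset.sum_congr rfl (fun i _ => by ring)
  have hBst : ∀ a, B.mulVec sT a = ∑ b, B a b * sT b := by
    intro a; simp [Matrix.mulVec, dotProduct]
  have hBnn : ∀ a b, 0 ≤ B a b := by
    intro a b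
    rw [hB]
    simp only [Matrix.mul_apply, Matrix.transpose_apply]
    exact Finset.sum_nonneg fun i _ => mul_nonneg (hA i a) (hA i b)
  have hBsym : ∀ a b, B a b = B b a := by
    intro a b
    simp only [hB, Matrix.mul_apply, Matrix.transpose_apply]
    exact Finset.sum_congr rfl (fun i _ => mul_comm _ _)
  have hkey := nnsc_key B hBnn hBsym sT v hsT
  have hlampos : 0 ≤ ∑ a, lam * v a ^ 2 / sT a := by
    refine Finset.sum_nonneg (fun a _ => ?_)
    have := (hsT a).le
    positivity
  rw [hG s, hFs, hvg, hvK]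
  simp only [hBst]
  have hsplit : ∑ a, ((∑ b, B a b * sT b) + lam) * v a ^ 2 / sT a
      = ∑ a, (∑ b, B a b * sT b) * v a ^ 2 / sT a + ∑ a, lam * v a ^ 2 / sT a := by
    rw [← Finset.sum_add_distrib]
    exact Finset.sum_congr rfl (fun a _ => by ring)
  rw [hsplit]
  rw [hquad]
  linarith
end

section
/- Let x ∈ ℝᵐ, let A be an m×k real matrix with nonnegative entries, let λ ≥ 0, and let sᵗ ∈ ℝᵏ have strictly positive entries with (AᵀAsᵗ)_a + λ > 0 for every a. Then the vector s* defined by s*_a = sᵗ_a · (Aᵀx)_a / ((AᵀAsᵗ)_a + λ) is a global minimizer over ℝᵏ of the function s ↦ G(s, sᵗ) = F(sᵗ) + (s − sᵗ)ᵀ∇F(sᵗ) + (1/2)·(s − sᵗ)ᵀK(sᵗ)(s − sᵗ), where ∇F(sᵗ) = Aᵀ(Asᵗ − x) + λ·1. -/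
/-!
The auxiliary function is `F(sᵗ)` plus the quadratic `u ↦ u ⬝ᵥ ∇F + ½ uᵀ K u` in `u = s − sᵗ`,
and `K` is diagonal with positive entries, hence positive semidefinite; such a quadratic is
minimised wherever `K u = −∇F`. The multiplicative update solves this equation coordinatewise:
`K (s* − sᵗ) = Aᵀx − (AᵀA sᵗ + λ) = −∇F`.
-/

open Matrix BigOperators

theorem Matrix.PosSemidef.dotProduct_add_half_quadForm_le {n : Type*} [Fintype n]
    {K : Matrix n n ℝ} (hK : K.PosSemidef) {g v : n → ℝ} (hv : K *ᵥ v = -g) (u : n → ℝ) :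
    v ⬝ᵥ g + 1 / 2 * (v ⬝ᵥ K *ᵥ v) ≤ u ⬝ᵥ g + 1 / 2 * (u ⬝ᵥ K *ᵥ u) := by
  obtain ⟨w, rfl⟩ : ∃ w, u = v + w := ⟨u - v, by abel⟩
  have hsymm : v ⬝ᵥ K *ᵥ w = w ⬝ᵥ K *ᵥ v := by
    rw [dotProduct_mulVec, ← mulVec_transpose, dotProduct_comm,
      ← conjTranspose_eq_transpose_of_trivial, hK.isHermitian.eq]
  have hw : 0 ≤ w ⬝ᵥ K *ᵥ w := by simpa using hK.dotProduct_mulVec_nonneg w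
  simp only [mulVec_add, add_dotProduct, dotProduct_add, hsymm, hv, dotProduct_neg]
  linarith

theorem diagonal_div_mulVec_mul_div_sub {n : Type*} [Fintype n] [DecidableEq n]
    {d s : n → ℝ} (hd : ∀ a, d a ≠ 0) (hs : ∀ a, s a ≠ 0) (c : n → ℝ) :
    diagonal (fun a => d a / s a) *ᵥ ((fun a => s a * c a / d a) - s) = -(d - c) := by
  ext a
  simp only [mulVec_diagonal, Pi.sub_apply, Pi.neg_apply]
  field_simp [hd a, hs a]
  ring

theorem nnsc_multiplicative_update_minimizes_auxiliary_general
    {m k : ℕ}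
    (x : Fin m → ℝ) (A : Matrix (Fin m) (Fin k) ℝ)
    (lam : ℝ)
    (sT : Fin k → ℝ) (hsT : ∀ a, 0 < sT a)
    (hden : ∀ a, 0 < (Aᵀ * A).mulVec sT a + lam)
    (F : (Fin k → ℝ) → ℝ)
    (K : Matrix (Fin k) (Fin k) ℝ)
    (hK : K = Matrix.diagonal (fun a => ((Aᵀ * A).mulVec sT a + lam) / sT a))
    (gradF : Fin k → ℝ)
    (hgrad : gradF = Aᵀ.mulVec (A.mulVec sT - x) + fun _ => lam)
    (G : (Fin k → ℝ) → ℝ)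
    (hG : ∀ s, G s = F sT + (s - sT) ⬝ᵥ gradF
      + (1 / 2) * ((s - sT) ⬝ᵥ K.mulVec (s - sT)))
    (sStar : Fin k → ℝ)
    (hsStar : ∀ a, sStar a = sT a * (Aᵀ.mulVec x) a / ((Aᵀ * A).mulVec sT a + lam)) :
    ∀ s : Fin k → ℝ, G sStar ≤ G s := by
  intro s
  have hK_nonneg : K.PosSemidef := hK ▸ .diagonal fun a => (div_pos (hden a) (hsT a)).le
  have hgrad' : gradF = (fun a => ((Aᵀ * A) *ᵥ sT) a + lam) - Aᵀ *ᵥ x := by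
    rw [hgrad, mulVec_sub, mulVec_mulVec]
    ext a
    simp only [Pi.add_apply, Pi.sub_apply]
    ring
  have hstationary : K *ᵥ (sStar - sT) = -gradF := by
    rw [hK, funext hsStar, hgrad']
    exact diagonal_div_mulVec_mul_div_sub (fun a => (hden a).ne') (fun a => (hsT a).ne') _
  simp only [hG, add_assoc]
  exact add_le_add_right (hK_nonneg.dotProduct_add_half_quadForm_le hstationary _) _

/-- The multiplicative update
`s*_a = sᵗ_a · (Aᵀx)_a / ((AᵀAsᵗ)_a + λ)` is a global minimizer over `ℝᵏ`
of the auxiliary function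
`G(s, sᵗ) = F(sᵗ) + (s − sᵗ)ᵀ∇F(sᵗ) + (1/2)·(s − sᵗ)ᵀK(sᵗ)(s − sᵗ)`,
where `∇F(sᵗ) = Aᵀ(Asᵗ − x) + λ·1` and `K(sᵗ)` is the diagonal matrix with
entries `((AᵀA sᵗ)_a + λ) / sᵗ_a`, and
`F(s) = (1/2)·‖x − As‖² + λ·Σ_i s_i`. -/
theorem nnsc_multiplicative_update_minimizes_auxiliary
    {m k : ℕ}
    (x : Fin m → ℝ) (A : Matrix (Fin m) (Fin k) ℝ)
    (hA : ∀ i j, 0 ≤ A i j)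
    (lam : ℝ) (hlam : 0 ≤ lam)
    (sT : Fin k → ℝ) (hsT : ∀ a, 0 < sT a)
    (hden : ∀ a, 0 < (Aᵀ * A).mulVec sT a + lam)
    (F : (Fin k → ℝ) → ℝ)
    (hF : ∀ s', F s' =
      (1 / 2) * (∑ i, (x i - A.mulVec s' i) ^ 2) + lam * ∑ i, s' i)
    (K : Matrix (Fin k) (Fin k) ℝ)
    (hK : K = Matrix.diagonal (fun a => ((Aᵀ * A).mulVec sT a + lam) / sT a))
    (gradF : Fin k → ℝ)
    (hgrad : gradF = Aᵀ.mulVec (A.mulVec sT - x) + fun _ => lam)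
    (G : (Fin k → ℝ) → ℝ)
    (hG : ∀ s, G s = F sT + (s - sT) ⬝ᵥ gradF
      + (1 / 2) * ((s - sT) ⬝ᵥ K.mulVec (s - sT)))
    (sStar : Fin k → ℝ)
    (hsStar : ∀ a, sStar a = sT a * (Aᵀ.mulVec x) a / ((Aᵀ * A).mulVec sT a + lam)) :
    ∀ s : Fin k → ℝ, G sStar ≤ G s :=
  nnsc_multiplicative_update_minimizes_auxiliary_general x A lam sT hsT hden F K hK gradF hgrad G hG
    sStar hsStar
end

section
/- Let X be an m×n real matrix and A an m×k real matrix, both with nonnegative entries, let λ > 0, and suppose every entry of AᵀX is strictly positive. Define a sequence of k×n matrices by choosing S⁰ with strictly positive entries and setting Sᵗ⁺¹_{an} = Sᵗ_{an} · (AᵀX)_{an} / ((AᵀASᵗ)_{an} + λ) for all t ≥ 0. Then every Sᵗ has strictly positive entries, and the sequence C(A, Sᵗ) is nonincreasing in t. -/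
open Matrix BigOperators

private lemma nnsc_amgm (sa sb da db : ℝ) (ha : 0 < sa) (hb : 0 < sb) :
    da * db ≤ (sb / sa * da ^ 2 + sa / sb * db ^ 2) / 2 := by
  rw [le_div_iff₀ (by norm_num : (0:ℝ) < 2), ← sub_nonneg]
  have e : sb / sa * da ^ 2 + sa / sb * db ^ 2 - da * db * 2
      = (sb * da - sa * db) ^ 2 / (sa * sb) := by
    field_simp; ring
  rw [e]; positivity

private lemma nnsc_col_bound {k : ℕ} (B : Matrix (Fin k) (Fin k) ℝ)
    (hBnn : ∀ a b, 0 ≤ B a b) (hBsym : ∀ a b, B a b = B b a)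
    (s d : Fin k → ℝ) (hs : ∀ a, 0 < s a) :
    ∑ a, ∑ b, B a b * (d a * d b) ≤ ∑ a, (∑ b, B a b * s b) / s a * (d a) ^ 2 := by
  have hswap : ∑ a, ∑ b, B a b * (s a / s b * d b ^ 2)
      = ∑ a, ∑ b, B a b * (s b / s a * d a ^ 2) := by
    rw [Finset.sum_comm]
    exact Finset.sum_congr rfl fun a _ => Finset.sum_congr rfl fun b _ => by
      rw [hBsym]
  calc ∑ a, ∑ b, B a b * (d a * d b)
      ≤ ∑ a, ∑ b, B a b * ((s b / s a * d a ^ 2 + s a / s b * d b ^ 2) / 2) :=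
        Finset.sum_le_sum fun a _ => Finset.sum_le_sum fun b _ =>
          mul_le_mul_of_nonneg_left (nnsc_amgm _ _ _ _ (hs a) (hs b)) (hBnn a b)
    _ = ((∑ a, ∑ b, B a b * (s b / s a * d a ^ 2))
          + ∑ a, ∑ b, B a b * (s a / s b * d b ^ 2)) / 2 := by
        simp only [← mul_div_assoc, mul_add, add_div, Finset.sum_add_distrib,
          Finset.sum_div]
    _ = ∑ a, ∑ b, B a b * (s b / s a * d a ^ 2) := by rw [hswap]; ring
    _ = ∑ a, (∑ b, B a b * s b) / s a * (d a) ^ 2 := by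
        refine Finset.sum_congr rfl fun a _ => ?_
        rw [Finset.sum_div, Finset.sum_mul]
        exact Finset.sum_congr rfl fun b _ => by ring

private lemma nnsc_adj {m n k : ℕ} (A : Matrix (Fin m) (Fin k) ℝ)
    (M : Matrix (Fin m) (Fin n) ℝ) (D : Matrix (Fin k) (Fin n) ℝ) :
    ∑ i, ∑ j, M i j * (A * D) i j = ∑ a, ∑ j, (Aᵀ * M) a j * D a j := by
  simp only [Matrix.mul_apply, Matrix.transpose_apply, Finset.mul_sum, Finset.sum_mul]
  rw [Finset.sum_comm]
  conv_rhs => rw [Finset.sum_comm]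
  refine Finset.sum_congr rfl fun j _ => ?_
  rw [Finset.sum_comm]
  exact Finset.sum_congr rfl fun a _ => Finset.sum_congr rfl fun i _ => by ring

private lemma nnsc_sq_expand {m k : ℕ} (A : Matrix (Fin m) (Fin k) ℝ) (v : Fin k → ℝ) :
    ∑ i, (∑ a, A i a * v a) ^ 2 = ∑ a, ∑ b, (Aᵀ * A) a b * (v a * v b) := by
  simp only [Matrix.mul_apply, Matrix.transpose_apply, Finset.sum_mul, Finset.mul_sum, sq]
  rw [Finset.sum_comm]
  refine Finset.sum_congr rfl fun a _ => ?_
  rw [Finset.sum_comm]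
  exact Finset.sum_congr rfl fun b _ => Finset.sum_congr rfl fun i _ => by ring

/-- Iterating the multiplicative update
`Sᵗ⁺¹_{an} = Sᵗ_{an} · (AᵀX)_{an} / ((AᵀASᵗ)_{an} + λ)` starting from a
strictly positive `S⁰` (with `λ > 0` and all entries of `AᵀX` strictly
positive) keeps all entries strictly positive, and the objective
`C(A,S) = (1/2)·Σ_{ij}(X_{ij} − (AS)_{ij})² + λ·Σ_{ij} S_{ij}`
is nonincreasing along the sequence. -/
theorem nnsc_iterated_multiplicative_update_descent
    {m n k : ℕ}
    (X : Matrix (Fin m) (Fin n) ℝ) (A : Matrix (Fin m) (Fin k) ℝ)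
    (hX : ∀ i j, 0 ≤ X i j) (hA : ∀ i j, 0 ≤ A i j)
    (lam : ℝ) (hlam : 0 < lam)
    (hAtX : ∀ a b, 0 < (Aᵀ * X) a b)
    (S : ℕ → Matrix (Fin k) (Fin n) ℝ)
    (hS0 : ∀ a b, 0 < S 0 a b)
    (hrec : ∀ t a b,
      S (t + 1) a b = S t a b * (Aᵀ * X) a b / ((Aᵀ * A * S t) a b + lam))
    (C : Matrix (Fin k) (Fin n) ℝ → ℝ)
    (hC : ∀ S', C S' =
      (1 / 2) * (∑ i, ∑ j, (X i j - (A * S') i j) ^ 2) + lam * ∑ i, ∑ j, S' i j) :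
    (∀ t a b, 0 < S t a b) ∧ (∀ t, C (S (t + 1)) ≤ C (S t)) := by
  have hBnn : ∀ a b, 0 ≤ (Aᵀ * A) a b := by
    intro a b
    rw [Matrix.mul_apply]
    exact Finset.sum_nonneg fun i _ => mul_nonneg (hA i a) (hA i b)
  have hBsym : ∀ a b, (Aᵀ * A) a b = (Aᵀ * A) b a := by
    intro a b
    simp only [Matrix.mul_apply, Matrix.transpose_apply]
    exact Finset.sum_congr rfl fun i _ => mul_comm _ _
  -- positivity
  have hpos : ∀ t a b, 0 < S t a b := by
    intro t
    induction t with
    | zero => exact hS0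
    | succ t ih =>
      intro a b
      have hBS : 0 ≤ (Aᵀ * A * S t) a b := by
        rw [Matrix.mul_assoc, Matrix.mul_apply]
        refine Finset.sum_nonneg fun i _ => ?_
        refine mul_nonneg (by simpa using hA i a) ?_
        rw [Matrix.mul_apply]
        exact Finset.sum_nonneg fun c _ => mul_nonneg (hA i c) (ih c b).le
      rw [hrec]
      exact div_pos (mul_pos (ih a b) (hAtX a b)) (by linarith)
  refine ⟨hpos, fun t => ?_⟩
  -- notation
  set D : Matrix (Fin k) (Fin n) ℝ := S (t + 1) - S t with hD
  have hDab : ∀ a b, D a b = S (t + 1) a b - S t a b := fun a b => rfl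
  have hBS0 : ∀ a j, 0 ≤ (Aᵀ * A * S t) a j := by
    intro a j
    rw [Matrix.mul_apply]
    exact Finset.sum_nonneg fun c _ => mul_nonneg (hBnn a c) (hpos t c j).le
  have hq : ∀ a j, 0 < (Aᵀ * A * S t) a j + lam := fun a j => by
    have := hBS0 a j; linarith
  -- gradient identity: (q - P) * D = -(q * D^2 / s)
  have hgrad : ∀ a j,
      (((Aᵀ * A * S t) a j + lam) - (Aᵀ * X) a j) * D a j
        = -(((Aᵀ * A * S t) a j + lam) * (D a j) ^ 2 / S t a j) := by
    intro a j
    have hs := (hpos t a j).ne'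
    have hqj := (hq a j).ne'
    rw [hDab, hrec]
    field_simp
    ring
  -- expansion of the quadratic term
  have hAD : A * S (t + 1) = A * S t + A * D := by
    rw [← Matrix.mul_add]
    congr 1
    ext a b
    simp [hDab]
  have hptwise : ∀ i j, (X i j - (A * S (t + 1)) i j) ^ 2
      = (X i j - (A * S t) i j) ^ 2
        - 2 * ((X i j - (A * S t) i j) * ((A * D) i j)) + ((A * D) i j) ^ 2 := by
    intro i j
    rw [hAD, Matrix.add_apply]
    ring
  have hkey : ∑ i, ∑ j, (X i j - (A * S (t + 1)) i j) ^ 2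
      = ∑ i, ∑ j, (X i j - (A * S t) i j) ^ 2
        - 2 * (∑ i, ∑ j, (X i j - (A * S t) i j) * ((A * D) i j))
        + ∑ i, ∑ j, ((A * D) i j) ^ 2 := by
    simp only [hptwise, Finset.sum_add_distrib, Finset.sum_sub_distrib, ← Finset.mul_sum]
  -- adjoint step
  have hadj : ∑ i, ∑ j, (X i j - (A * S t) i j) * ((A * D) i j)
      = ∑ a, ∑ j, ((Aᵀ * X) a j - (Aᵀ * A * S t) a j) * D a j := by
    have h := nnsc_adj A (X - A * S t) D
    simp only [Matrix.sub_apply, Matrix.mul_sub, Matrix.mul_assoc] at h ⊢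
    exact h
  -- quadratic form expansion
  have hquad : ∑ i, ∑ j, ((A * D) i j) ^ 2
      = ∑ j, ∑ a, ∑ b, (Aᵀ * A) a b * (D a j * D b j) := by
    rw [Finset.sum_comm]
    refine Finset.sum_congr rfl fun j _ => ?_
    have := nnsc_sq_expand A (fun a => D a j)
    simpa [Matrix.mul_apply] using this
  -- linear term
  have hlin : ∑ i, ∑ j, S (t + 1) i j = ∑ i, ∑ j, S t i j + ∑ i, ∑ j, D i j := by
    simp only [hDab, Finset.sum_sub_distrib, Finset.sum_add_distrib]
    ring
  -- main expansion of the cost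
  have hexp : C (S (t + 1)) = C (S t)
      + (1 / 2) * (∑ j, ∑ a, ∑ b, (Aᵀ * A) a b * (D a j * D b j))
      + ∑ a, ∑ j, (((Aᵀ * A * S t) a j + lam) - (Aᵀ * X) a j) * D a j := by
    rw [hC, hC, hkey, hadj, hquad, hlin]
    have hl : ∑ a, ∑ j, (((Aᵀ * A * S t) a j + lam) - (Aᵀ * X) a j) * D a j
        = -(∑ a, ∑ j, ((Aᵀ * X) a j - (Aᵀ * A * S t) a j) * D a j)
          + lam * ∑ a, ∑ j, D a j := by
      simp only [← Finset.sum_neg_distrib, Finset.mul_sum, ← Finset.sum_add_distrib]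
      exact Finset.sum_congr rfl fun a _ => Finset.sum_congr rfl fun j _ => by ring
    rw [hl]
    ring
  -- bound the quadratic term
  have hbound : ∀ j, ∑ a, ∑ b, (Aᵀ * A) a b * (D a j * D b j)
      ≤ ∑ a, (((Aᵀ * A * S t) a j + lam) / S t a j) * (D a j) ^ 2 := by
    intro j
    refine le_trans (nnsc_col_bound (Aᵀ * A) hBnn hBsym (fun a => S t a j)
      (fun a => D a j) (fun a => hpos t a j)) ?_
    refine Finset.sum_le_sum fun a _ => ?_
    have h1 : (∑ b, (Aᵀ * A) a b * S t b j) = (Aᵀ * A * S t) a j := by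
      rw [Matrix.mul_apply]
    rw [h1]
    have h2 : (Aᵀ * A * S t) a j / S t a j ≤ ((Aᵀ * A * S t) a j + lam) / S t a j := by
      apply div_le_div_of_nonneg_right (by linarith) (hpos t a j).le
    exact mul_le_mul_of_nonneg_right h2 (sq_nonneg _)
  -- gradient sum
  have hgsum : ∑ a, ∑ j, (((Aᵀ * A * S t) a j + lam) - (Aᵀ * X) a j) * D a j
      = -(∑ a, ∑ j, (((Aᵀ * A * S t) a j + lam) / S t a j) * (D a j) ^ 2) := by
    rw [← Finset.sum_neg_distrib]
    refine Finset.sum_congr rfl fun a _ => ?_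
    rw [← Finset.sum_neg_distrib]
    refine Finset.sum_congr rfl fun j _ => ?_
    rw [hgrad a j]
    ring
  set Q : ℝ := ∑ a, ∑ j, (((Aᵀ * A * S t) a j + lam) / S t a j) * (D a j) ^ 2 with hQ
  have hQnn : 0 ≤ Q := by
    refine Finset.sum_nonneg fun a _ => Finset.sum_nonneg fun j _ => ?_
    exact mul_nonneg (div_nonneg (hq a j).le (hpos t a j).le) (sq_nonneg _)
  have hT1 : ∑ j, ∑ a, ∑ b, (Aᵀ * A) a b * (D a j * D b j) ≤ Q := by
    rw [hQ]
    refine le_trans (Finset.sum_le_sum fun j _ => hbound j) ?_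
    exact le_of_eq Finset.sum_comm
  rw [hexp, hgsum]
  nlinarith [hT1, hQnn]
end

section
/- Let X be an m×n real matrix and λ > 0, and define the unconstrained sparse coding objective C(A,S) = (1/2)·Σ_{ij}(X_{ij} − (AS)_{ij})² + λ·Σ_{ij}|S_{ij}| over all m×k real matrices A and k×n real matrices S. Then the infimum of C(A,S) over all (A,S) equals the infimum of (1/2)·Σ_{ij}(X_{ij} − (AS)_{ij})² over all (A,S); i.e. without a scale constraint the solution does not depend on the sparseness term, which can be eliminated by rescaling (A,S) ↦ (cA, S/c) with c → ∞. -/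
open Matrix BigOperators

/-- For the unconstrained sparse coding objective
`C(A,S) = (1/2)·Σ_{ij}(X_{ij} − (AS)_{ij})² + λ·Σ_{ij}|S_{ij}|` with `λ > 0`,
the infimum of `C(A,S)` over all pairs `(A,S)` equals the infimum of the
reconstruction term `(1/2)·Σ_{ij}(X_{ij} − (AS)_{ij})²` over all pairs:
without a scale constraint the sparseness term can be eliminated. -/
theorem sparse_coding_infimum_independent_of_penalty
    {m n k : ℕ}
    (X : Matrix (Fin m) (Fin n) ℝ) (lam : ℝ) (hlam : 0 < lam)
    (C : Matrix (Fin m) (Fin k) ℝ → Matrix (Fin k) (Fin n) ℝ → ℝ)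
    (hC : ∀ A S, C A S =
      (1 / 2) * (∑ i, ∑ j, (X i j - (A * S) i j) ^ 2) + lam * ∑ i, ∑ j, |S i j|)
    (R : Matrix (Fin m) (Fin k) ℝ → Matrix (Fin k) (Fin n) ℝ → ℝ)
    (hR : ∀ A S, R A S = (1 / 2) * (∑ i, ∑ j, (X i j - (A * S) i j) ^ 2)) :
    sInf {r : ℝ | ∃ A S, r = C A S} = sInf {r : ℝ | ∃ A S, r = R A S} := by
  have hRnn : ∀ A S, 0 ≤ R A S := by
    intro A S
    rw [hR]
    positivity
  have hTnn : ∀ (S : Matrix (Fin k) (Fin n) ℝ), 0 ≤ ∑ i, ∑ j, |S i j| := by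
    intro S; positivity
  have hCnn : ∀ A S, 0 ≤ C A S := by
    intro A S
    rw [hC]
    have := hTnn S
    positivity
  have hRbdd : BddBelow {r : ℝ | ∃ A S, r = R A S} := by
    refine ⟨0, ?_⟩
    rintro r ⟨A, S, rfl⟩; exact hRnn A S
  have hCbdd : BddBelow {r : ℝ | ∃ A S, r = C A S} := by
    refine ⟨0, ?_⟩
    rintro r ⟨A, S, rfl⟩; exact hCnn A S
  have hRne : {r : ℝ | ∃ A S, r = R A S}.Nonempty := ⟨R 0 0, 0, 0, rfl⟩
  have hCne : {r : ℝ | ∃ A S, r = C A S}.Nonempty := ⟨C 0 0, 0, 0, rfl⟩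
  apply le_antisymm
  · -- sInf C ≤ sInf R
    apply le_csInf hRne
    rintro b ⟨A, S, rfl⟩
    -- show sInf C ≤ R A S via rescaling
    refine le_of_forall_pos_le_add ?_
    intro ε hε
    set T := ∑ i, ∑ j, |S i j| with hT
    set c : ℝ := (lam * T + 1) / ε with hc
    have hc0 : 0 < c := by
      apply div_pos _ hε
      have := hTnn S
      nlinarith
    have key : C (c • A) (c⁻¹ • S) = R A S + lam * T / c := by
      rw [hC, hR]
      have hmul : (c • A) * (c⁻¹ • S) = A * S := by
        rw [Matrix.smul_mul, Matrix.mul_smul, smul_smul,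
          mul_inv_cancel₀ (ne_of_gt hc0), one_smul]
      rw [hmul]
      have habs : ∑ i, ∑ j, |(c⁻¹ • S) i j| = c⁻¹ * T := by
        rw [hT, Finset.mul_sum]
        refine Finset.sum_congr rfl fun i _ => ?_
        rw [Finset.mul_sum]
        refine Finset.sum_congr rfl fun j _ => ?_
        simp [Matrix.smul_apply, abs_mul, abs_of_pos (inv_pos.mpr hc0)]
      rw [habs]
      ring
    have h1 : sInf {r : ℝ | ∃ A S, r = C A S} ≤ R A S + lam * T / c := by
      rw [← key]
      exact csInf_le hCbdd ⟨c • A, c⁻¹ • S, rfl⟩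
    have h2 : lam * T / c ≤ ε := by
      rw [hc, div_div_eq_mul_div]
      have hTS := hTnn S
      have hd : (0:ℝ) < lam * T + 1 := by nlinarith
      rw [div_le_iff₀ hd]
      nlinarith
    linarith
  · -- sInf R ≤ sInf C
    apply le_csInf hCne
    rintro b ⟨A, S, rfl⟩
    have h1 : R A S ≤ C A S := by
      rw [hR, hC]
      have := hTnn S
      nlinarith
    calc sInf {r : ℝ | ∃ A S, r = R A S} ≤ R A S := csInf_le hRbdd ⟨A, S, rfl⟩
      _ ≤ C A S := h1
end

section
/- Let v ∈ ℝᵐ and let v⁺ ∈ ℝᵐ be defined by v⁺_i = max(v_i, 0). If v⁺ ≠ 0, then the vector u* = v⁺/‖v⁺‖ minimizes the Euclidean distance ‖v − u‖ over the set {u ∈ ℝᵐ : u_i ≥ 0 for all i, and ‖u‖ = 1}; i.e. setting negative entries to zero and rescaling to unit norm projects onto the closest point satisfying both the nonnegativity and the unit-norm constraints. -/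
/-!
Both `‖v - u⋆‖²` and `‖v - u‖²` equal `‖v‖² - 2⟪v, ·⟫ + ‖·‖²`, so it suffices to show that `u⋆`
has the larger inner product with `v`. For a nonnegative unit vector `u`, shrinking the negative
entries of `v` to zero can only increase `⟪v, u⟫`, so `⟪v, u⟫ ≤ ⟪v⁺, u⟫ ≤ ‖v⁺‖` by Cauchy–Schwarz,
while `⟪v, v⁺⟫ = ‖v⁺‖²` gives `⟪v, u⋆⟫ = ‖v⁺‖`.
-/

open RealInnerProductSpace

theorem norm_sub_le_norm_sub_of_inner_le {E : Type*} [NormedAddCommGroup E]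
    [InnerProductSpace ℝ E] {v a b : E} (hnorm : ‖a‖ ≤ ‖b‖) (hinner : ⟪v, b⟫ ≤ ⟪v, a⟫) :
    ‖v - a‖ ≤ ‖v - b‖ := by
  rw [← sq_le_sq₀ (norm_nonneg _) (norm_nonneg _), norm_sub_sq_real, norm_sub_sq_real]
  have hsq : ‖a‖ ^ 2 ≤ ‖b‖ ^ 2 := pow_le_pow_left₀ (norm_nonneg a) hnorm 2
  linarith

theorem norm_inv_norm_smul_le_one {E : Type*} [NormedAddCommGroup E] [NormedSpace ℝ E] (w : E) :
    ‖‖w‖⁻¹ • w‖ ≤ 1 := by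
  rw [norm_smul, norm_inv, norm_norm]
  exact inv_mul_le_one_of_le₀ le_rfl (norm_nonneg w)

namespace EuclideanSpace

variable {ι : Type*} [Fintype ι] {v w u : EuclideanSpace ℝ ι}

theorem inner_eq_norm_sq_of_posPart (hw : ∀ i, w i = max (v i) 0) : ⟪v, w⟫ = ‖w‖ ^ 2 := by
  rw [← real_inner_self_eq_norm_sq]
  simp only [PiLp.inner_apply, RCLike.inner_apply, conj_trivial]
  refine Finset.sum_congr rfl fun i _ => ?_
  rcases le_total 0 (v i) with h | h
  · rw [hw i, max_eq_left h]
  · rw [hw i, max_eq_right h, mul_zero, zero_mul]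

theorem inner_le_inner_posPart (hw : ∀ i, w i = max (v i) 0) (hu : ∀ i, 0 ≤ u i) :
    ⟪v, u⟫ ≤ ⟪w, u⟫ := by
  simp only [PiLp.inner_apply, RCLike.inner_apply, conj_trivial]
  exact Finset.sum_le_sum fun i _ =>
    mul_le_mul_of_nonneg_left ((hw i).symm ▸ le_max_left _ _) (hu i)

theorem inner_inv_norm_smul_posPart (hw : ∀ i, w i = max (v i) 0) :
    ⟪v, ‖w‖⁻¹ • w⟫ = ‖w‖ := by
  rw [real_inner_smul_right, inner_eq_norm_sq_of_posPart hw, sq, ← mul_assoc, inv_mul_mul_self]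

theorem inner_le_norm_posPart (hw : ∀ i, w i = max (v i) 0) (hu : ∀ i, 0 ≤ u i)
    (hun : ‖u‖ = 1) : ⟪v, u⟫ ≤ ‖w‖ :=
  calc ⟪v, u⟫ ≤ ⟪w, u⟫ := inner_le_inner_posPart hw hu
    _ ≤ ‖w‖ * ‖u‖ := real_inner_le_norm w u
    _ = ‖w‖ := by rw [hun, mul_one]

end EuclideanSpace

theorem rectify_renormalize_is_projection_general
    {m : ℕ}
    (v : EuclideanSpace ℝ (Fin m))
    (vplus : EuclideanSpace ℝ (Fin m))
    (hvplus : ∀ i, vplus i = max (v i) 0)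
    (uStar : EuclideanSpace ℝ (Fin m))
    (huStar : uStar = ‖vplus‖⁻¹ • vplus) :
    ∀ u : EuclideanSpace ℝ (Fin m), (∀ i, 0 ≤ u i) → ‖u‖ = 1 →
      ‖v - uStar‖ ≤ ‖v - u‖ := by
  intro u hu hun
  subst huStar
  refine norm_sub_le_norm_sub_of_inner_le (hun ▸ norm_inv_norm_smul_le_one vplus) ?_
  rw [EuclideanSpace.inner_inv_norm_smul_posPart hvplus]
  exact EuclideanSpace.inner_le_norm_posPart hvplus hu hun

/-- Rectifying and renormalizing projects onto the set of
nonnegative unit vectors: if `v⁺_i = max(v_i, 0)` and `v⁺ ≠ 0`, then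
`u* = v⁺/‖v⁺‖` minimizes the Euclidean distance `‖v − u‖` over
`{u : ∀ i, 0 ≤ u_i, ‖u‖ = 1}`. -/
theorem rectify_renormalize_is_projection
    {m : ℕ}
    (v : EuclideanSpace ℝ (Fin m))
    (vplus : EuclideanSpace ℝ (Fin m))
    (hvplus : ∀ i, vplus i = max (v i) 0)
    (hne : vplus ≠ 0)
    (uStar : EuclideanSpace ℝ (Fin m))
    (huStar : uStar = ‖vplus‖⁻¹ • vplus) :
    ∀ u : EuclideanSpace ℝ (Fin m), (∀ i, 0 ≤ u i) → ‖u‖ = 1 →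
      ‖v - uStar‖ ≤ ‖v - u‖ :=
  rectify_renormalize_is_projection_general v vplus hvplus uStar huStar
end
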